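/- arXiv:2101.05557 — 3 statements merged into one kernel-verified Lean document; each statement's English description precedes it below -/
import Mathlib

section
/- Let K = Q(α) with α^3 - α^2 - 82α + 64 = 0, b = (10α^2 + 90α - 1936)/19773, c = (6α^2 + 50α - 208)/1521, and E_0 : y^2 + (1-c)xy - by = x^3 - bx^2 over K. Then the point P = (0,0) on E_0 satisfies 13·P = O, and P ≠ O; i.e., P is a point of order 13. -/
/-!
In Tate normal form `y² + (1 - c)xy - by = x³ - bx²` the first multiples of `P = (0, 0)` are
`2P = (b, bc)` and `3P = (c, b - c)` for all `b ≠ 0`. For the given `b, c ∈ ℚ(α)` one more doubling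
gives `6P = (x₆, y₆)`, and the chord through `6P` and `P` meets the curve again at `6P` itself, so
`7P = -6P` and `13P = 0`. Each identity in `ℚ(α)` along the way is a polynomial identity in `α`
modulo the cubic (the `linear_combination` coefficients are the quotients), and each denominator is
nonzero because `1, α, α²` are linearly independent over `ℚ`.
-/

open Polynomial WeierstrassCurve.Affine

namespace AdjoinRoot

variable {R : Type*} [CommRing R] {f : R[X]}

lemma quadratic_root_ne_zero (hf : f.Monic) (hdeg : 2 < f.degree) {p q r : R} (hp : p ≠ 0) :
    of f p * root f ^ 2 + of f q * root f + of f r ≠ 0 := by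
  have hg : (C p * X ^ 2 + C q * X + C r).degree = 2 := degree_quadratic hp
  have hg₀ : C p * X ^ 2 + C q * X + C r ≠ 0 := fun h ↦ by simp [h] at hg
  convert mk_ne_zero_of_degree_lt hf hg₀ (hg ▸ hdeg) using 1
  simp

end AdjoinRoot

namespace WeierstrassCurve.Affine.Point

variable {F : Type*} [Field F] [DecidableEq F] {W : WeierstrassCurve.Affine F}

lemma exists_add_self_eq_some {x y ℓ x' y' : F} (h : W.Nonsingular x y) (hy : y ≠ W.negY x y)
    (hℓ : ℓ * (y - W.negY x y) = 3 * x ^ 2 + 2 * W.a₂ * x + W.a₄ - W.a₁ * y)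
    (hx' : W.addX x x ℓ = x') (hy' : W.addY x x y ℓ = y') :
    ∃ h' : W.Nonsingular x' y', some _ _ h + some _ _ h = some _ _ h' := by
  have hslope : W.slope x x y y = ℓ := by
    rw [slope_of_Y_ne rfl hy, div_eq_iff (sub_ne_zero.2 hy), hℓ]
  subst hslope hx' hy'
  exact ⟨_, add_self_of_Y_ne hy⟩

lemma exists_add_eq_some_of_X_ne {x₁ y₁ x₂ y₂ ℓ x₃ y₃ : F} (h₁ : W.Nonsingular x₁ y₁)
    (h₂ : W.Nonsingular x₂ y₂) (hx : x₁ ≠ x₂) (hℓ : ℓ * (x₁ - x₂) = y₁ - y₂)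
    (hx₃ : W.addX x₁ x₂ ℓ = x₃) (hy₃ : W.addY x₁ x₂ y₁ ℓ = y₃) :
    ∃ h₃ : W.Nonsingular x₃ y₃, some _ _ h₁ + some _ _ h₂ = some _ _ h₃ := by
  have hslope : W.slope x₁ x₂ y₁ y₂ = ℓ := by
    rw [slope_of_X_ne hx, div_eq_iff (sub_ne_zero.2 hx), hℓ]
  subst hslope hx₃ hy₃
  exact ⟨_, add_of_X_ne hx⟩

end WeierstrassCurve.Affine.Point

section TateNormalForm

def tateNormalForm {R : Type*} [CommRing R] (b c : R) : WeierstrassCurve.Affine R :=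
  ⟨1 - c, -b, -b, 0, 0⟩

lemma tateNormalForm_nonsingular_zero {R : Type*} [CommRing R] {b c : R} (hb : b ≠ 0) :
    (tateNormalForm b c).Nonsingular 0 0 := by
  rw [nonsingular_iff, equation_iff]
  refine ⟨by simp [tateNormalForm], Or.inr ?_⟩
  simpa [tateNormalForm] using hb.symm

variable {F : Type*} [Field F] [DecidableEq F] {b c : F}

lemma tateNormalForm_two_smul (hb : b ≠ 0) :
    ∃ h : (tateNormalForm b c).Nonsingular b (b * c),
      2 • Point.some _ _ (tateNormalForm_nonsingular_zero hb) = Point.some _ _ h := by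
  obtain ⟨h₂, e₂⟩ := Point.exists_add_self_eq_some (ℓ := 0) (x' := b) (y' := b * c)
    (tateNormalForm_nonsingular_zero (c := c) hb) (by simpa [tateNormalForm] using hb.symm)
    (by simp [tateNormalForm]) (by simp [tateNormalForm]) (by simp [addY, tateNormalForm]; ring)
  exact ⟨h₂, (two_nsmul _).trans e₂⟩

lemma tateNormalForm_three_smul (hb : b ≠ 0) :
    ∃ h : (tateNormalForm b c).Nonsingular c (b - c),
      3 • Point.some _ _ (tateNormalForm_nonsingular_zero hb) = Point.some _ _ h := by
  obtain ⟨h₂, e₂⟩ := tateNormalForm_two_smul (c := c) hb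
  obtain ⟨h₃, e₃⟩ := Point.exists_add_eq_some_of_X_ne (ℓ := c) (x₃ := c) (y₃ := b - c) h₂
    (tateNormalForm_nonsingular_zero hb) hb
    (by ring) (by simp [tateNormalForm]; ring) (by simp [addY, tateNormalForm]; ring)
  refine ⟨h₃, ?_⟩
  rw [succ_nsmul, e₂, e₃]

end TateNormalForm

namespace OrderThirteen

noncomputable abbrev cubic : ℚ[X] := X ^ 3 - X ^ 2 - 82 * X + 64

variable [Fact (Irreducible cubic)]

local notation "K" => AdjoinRoot cubic
local notation "α" => AdjoinRoot.root cubic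
local notation "b₀" => ((10 * α ^ 2 + 90 * α - 1936) / 19773 : K)
local notation "c₀" => ((6 * α ^ 2 + 50 * α - 208) / 1521 : K)
local notation "E₀" => tateNormalForm b₀ c₀
local notation "x₆" => ((4 * α ^ 2 + 32 * α - 404) / 2197 : K)
local notation "y₆" => ((-26 * α ^ 2 - 198 * α + 1700) / 28561 : K)

lemma cubic_root_eq_zero : α ^ 3 - α ^ 2 - 82 * α + 64 = 0 := by
  simpa using AdjoinRoot.eval₂_root cubic

lemma rat_quadratic_root_ne_zero {p q r : ℚ} (hp : p ≠ 0) :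
    (p : K) * α ^ 2 + q * α + r ≠ 0 := by
  have hdeg : 2 < cubic.degree := by
    rw [show cubic.degree = 3 by unfold cubic; compute_degree!]
    norm_num
  simpa using AdjoinRoot.quadratic_root_ne_zero (by unfold cubic; monicity!) hdeg hp

lemma b₀_ne_zero : b₀ ≠ 0 := by
  convert rat_quadratic_root_ne_zero (p := 10 / 19773) (q := 90 / 19773) (r := -1936 / 19773)
    (by norm_num) using 1
  push_cast
  ring

local notation "P₀" => Point.some _ _ (tateNormalForm_nonsingular_zero (c := c₀) b₀_ne_zero)

variable [DecidableEq K]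

lemma six_smul_P₀ : ∃ h : (E₀).Nonsingular x₆ y₆, 6 • P₀ = Point.some _ _ h := by
  obtain ⟨h₃, e₃⟩ := tateNormalForm_three_smul (c := c₀) b₀_ne_zero
  have hy : b₀ - c₀ - (E₀).negY c₀ (b₀ - c₀) = ((-11548 / 2313441 : ℚ) : K) * α ^ 2 +
      ((-94568 / 2313441 : ℚ) : K) * α + ((87296 / 2313441 : ℚ) : K) := by
    simp only [negY, tateNormalForm]
    push_cast
    linear_combination (-(212 : K) / 771147 - 4 / 257049 * α) * cubic_root_eq_zero
  obtain ⟨h₆, e₆⟩ := Point.exists_add_self_eq_some (ℓ := (-α ^ 2 - 8 * α - 68) / 169)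
    (x' := x₆) (y' := y₆) h₃ (sub_ne_zero.1 (hy ▸ rat_quadratic_root_ne_zero (by norm_num)))
    (by
      simp only [negY, tateNormalForm]
      linear_combination ((3160 : K) / 30074733 + 592 / 30074733 * α + 308 / 130323843 * α ^ 2 +
        4 / 43441281 * α ^ 3) * cubic_root_eq_zero)
    (by
      simp only [addX, tateNormalForm]
      linear_combination ((257 : K) / 257049 + 5 / 85683 * α) * cubic_root_eq_zero)
    (by
      simp only [addY, negAddY, addX, negY, tateNormalForm]
      linear_combination (-(324977 : K) / 390971529 + 961 / 30074733 * α +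
        1895 / 130323843 * α ^ 2 + 25 / 43441281 * α ^ 3) * cubic_root_eq_zero)
  refine ⟨h₆, ?_⟩
  rw [show 6 = 3 * 2 from rfl, mul_nsmul, e₃, two_nsmul, e₆]

lemma seven_smul_P₀ : (7 • P₀ : (E₀).Point) = -(6 • P₀) := by
  obtain ⟨h₆, e₆⟩ := six_smul_P₀
  have hx : x₆ ≠ 0 := by
    convert rat_quadratic_root_ne_zero (p := 4 / 2197) (q := 32 / 2197) (r := -404 / 2197)
      (by norm_num) using 1
    push_cast
    ring
  obtain ⟨h₇, e₇⟩ := Point.exists_add_eq_some_of_X_ne (ℓ := (-α ^ 2 - 9 * α - 98) / 338)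
    (x₃ := x₆) (y₃ := (E₀).negY x₆ y₆) h₆ (tateNormalForm_nonsingular_zero b₀_ne_zero) hx
    (by linear_combination (-(36 : K) / 371293 - 2 / 371293 * α) * cubic_root_eq_zero)
    (by
      simp only [addX, tateNormalForm]
      linear_combination ((391 : K) / 1028196 + 7 / 342732 * α) * cubic_root_eq_zero)
    (by
      simp only [addY, negAddY, addX, negY, tateNormalForm]
      linear_combination (-(125902 : K) / 390971529 + 16675 / 3127772232 * α +
        77 / 20049822 * α ^ 2 + 49 / 347530248 * α ^ 3) * cubic_root_eq_zero)
  rw [succ_nsmul, e₆, e₇, Point.neg_some]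

lemma thirteen_smul_P₀ : (13 • P₀ : (E₀).Point) = 0 := by
  rw [show 13 = 6 + 7 from rfl, add_nsmul, seven_smul_P₀]
  exact add_neg_cancel (6 • P₀)

end OrderThirteen

/-- On the elliptic curve `E₀ : y² + (1-c)xy - by = x³ - bx²` over `K = ℚ(α)`, where
`α³ - α² - 82α + 64 = 0`, `b = (10α² + 90α - 1936)/19773` and `c = (6α² + 50α - 208)/1521`,
the point `P = (0,0)` satisfies `13·P = O` and `P ≠ O`, i.e. `P` has order `13`. -/
theorem stmt3 [Fact (Irreducible (X ^ 3 - X ^ 2 - 82 * X + 64 : ℚ[X]))] :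
    let K := AdjoinRoot (X ^ 3 - X ^ 2 - 82 * X + 64 : ℚ[X])
    let α : K := AdjoinRoot.root _
    let b : K := (10 * α ^ 2 + 90 * α - 1936) / 19773
    let c : K := (6 * α ^ 2 + 50 * α - 208) / 1521
    let W : WeierstrassCurve.Affine K := ⟨1 - c, -b, -b, 0, 0⟩
    ∃ h : W.Nonsingular 0 0,
      13 • (WeierstrassCurve.Affine.Point.some _ _ h) = 0 ∧
      WeierstrassCurve.Affine.Point.some _ _ h ≠ 0 := by
  exact ⟨_, OrderThirteen.thirteen_smul_P₀, Point.some_ne_zero _⟩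
end

section
/- For every nonzero rational number t, the polynomial w^3 + (-t^3 + t^2 - 3t + 1)w^2 + (-t^3 + 2t^2 - 2t)w + t^2 has square discriminant in Q. -/
theorem discr_cubic_family_eq_sq {R : Type*} [CommRing R] (t : R) :
    (⟨1, -t ^ 3 + t ^ 2 - 3 * t + 1, -t ^ 3 + 2 * t ^ 2 - 2 * t, t ^ 2⟩ : Cubic R).discr =
      (t ^ 2 * (t ^ 4 - t ^ 3 + 5 * t ^ 2 + t + 1)) ^ 2 := by
  simp only [Cubic.discr]
  ring

theorem stmt5_general (t : ℚ) :
    IsSquare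
      (⟨1, -t ^ 3 + t ^ 2 - 3 * t + 1, -t ^ 3 + 2 * t ^ 2 - 2 * t, t ^ 2⟩ : Cubic ℚ).discr := by
  rw [discr_cubic_family_eq_sq]
  exact IsSquare.sq _

/-- For every nonzero rational `t`, the cubic
`w³ + (-t³ + t² - 3t + 1)w² + (-t³ + 2t² - 2t)w + t²` has square discriminant in `ℚ`. -/
theorem stmt5 (t : ℚ) (ht : t ≠ 0) :
    IsSquare
      (⟨1, -t ^ 3 + t ^ 2 - 3 * t + 1, -t ^ 3 + 2 * t ^ 2 - 2 * t, t ^ 2⟩ : Cubic ℚ).discr :=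
  stmt5_general t
end

section
/- The substitution y = xt - 1 into y^2 + (x^3+x^2+1)y - x^2 - x yields a cubic in x whose discriminant (with respect to x) equals t(t+1)^3(-4t^5 + 5t^4 - t^3 - 25t^2 - 23t - 4), up to multiplication by a nonzero square in Q(t). -/
theorem Cubic.discr_mk_sub_one_sq_sub_two {R : Type*} [CommRing R] (t : R) :
    (⟨t, t - 1, t ^ 2 - 2, -(t + 1)⟩ : Cubic R).discr
      = t * (t + 1) * (-4 * t ^ 5 + 5 * t ^ 4 - t ^ 3 - 25 * t ^ 2 - 23 * t - 4) := by
  rw [Cubic.discr]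
  ring

theorem RatFunc.X_add_one_ne_zero {K : Type*} [Field K] : (RatFunc.X + 1 : RatFunc K) ≠ 0 := by
  simpa [RatFunc.algebraMap_X] using
    RatFunc.algebraMap_ne_zero (Polynomial.X_add_C_ne_zero (1 : K))

/-- Substituting `y = xt - 1` into `y² + (x³ + x² + 1)y - x² - x` yields (after removing the
factor `x`) a cubic in `x` whose discriminant equals
`t(t+1)³(-4t⁵ + 5t⁴ - t³ - 25t² - 23t - 4)` up to multiplication by a nonzero square in
`ℚ(t)`. -/
theorem stmt12 :
    let t : RatFunc ℚ := RatFunc.X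
    (∀ x : RatFunc ℚ,
      (x * t - 1) ^ 2 + (x ^ 3 + x ^ 2 + 1) * (x * t - 1) - x ^ 2 - x
        = x * (t * x ^ 3 + (t - 1) * x ^ 2 + (t ^ 2 - 2) * x - (t + 1))) ∧
    ∃ s : RatFunc ℚ, s ≠ 0 ∧
      (⟨t, t - 1, t ^ 2 - 2, -(t + 1)⟩ : Cubic (RatFunc ℚ)).discr
        = s ^ 2 * (t * (t + 1) ^ 3 * (-4 * t ^ 5 + 5 * t ^ 4 - t ^ 3 - 25 * t ^ 2
            - 23 * t - 4)) := by
  intro t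
  have ht : t + 1 ≠ 0 := RatFunc.X_add_one_ne_zero
  refine ⟨fun x => by ring, (t + 1)⁻¹, inv_ne_zero ht, ?_⟩
  rw [Cubic.discr_mk_sub_one_sq_sub_two]
  field_simp
end
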